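/- Let θ ∈ ℝ and define g_θ : ℝ² → ℝ² by g_θ(x,y) = (−sin(θ)·x³ + cos(θ)·y³, −cos(θ)·x³ − sin(θ)·y³). Suppose V : ℝ² → ℝ is a differentiable function with V(x,y) > 0 and ⟨∇V(x,y), g_θ(x,y)⟩ < 0 for all (x,y) ≠ (0,0). Then the function W(x,y) := V(x,y) + V(y,−x) + V(−x,−y) + V(−y,x) satisfies: W(y,−x) = W(x,y) for all (x,y), W(x,y) > 0 for all (x,y) ≠ (0,0), and ⟨∇W(x,y), g_θ(x,y)⟩ < 0 for all (x,y) ≠ (0,0). -/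

import Mathlib

/-! The vector field `g_θ` commutes with the quarter turn `R (x, y) = (y, -x)`, so the derivative
of `V ∘ Rᵏ` along `g_θ` at `p` is the derivative of `V` along `g_θ` at `Rᵏ p`. Each of the four
summands `V ∘ Rᵏ` of `W` is therefore again a strict Lyapunov function, and so is their sum;
the invariance `W ∘ R = W` comes from `R⁴ = 1`. -/

open RealInnerProductSpace Real

/-- The point `(x, y)` of the Euclidean plane `ℝ²`. -/
noncomputable def euclidPt (x y : ℝ) : EuclideanSpace ℝ (Fin 2) :=
  (WithLp.equiv 2 (Fin 2 → ℝ)).symm ![x, y]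

lemma fderiv_comp_apply_of_commute {𝕜 E G : Type*} [NontriviallyNormedField 𝕜]
    [NormedAddCommGroup E] [NormedSpace 𝕜 E] [NormedAddCommGroup G] [NormedSpace 𝕜 G]
    {g : E → E} {V : E → G} {A : E →L[𝕜] E} (hA : Function.Commute g A) {p : E}
    (hV : DifferentiableAt 𝕜 V (A p)) :
    fderiv 𝕜 (fun q => V (A q)) p (g p) = fderiv 𝕜 V (A p) (g (A p)) := by
  rw [fderiv_fun_comp p hV A.differentiableAt, A.fderiv, ContinuousLinearMap.comp_apply, hA p]

structure IsStrictLyapunov {F : Type*} [NormedAddCommGroup F] [InnerProductSpace ℝ F]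
    [CompleteSpace F] (g : F → F) (V : F → ℝ) : Prop where
  differentiable : Differentiable ℝ V
  pos : ∀ p ≠ 0, 0 < V p
  inner_gradient_neg : ∀ p ≠ 0, ⟪gradient V p, g p⟫ < 0

theorem IsStrictLyapunov.sum_comp {F ι : Type*} [NormedAddCommGroup F] [InnerProductSpace ℝ F]
    [CompleteSpace F] [Fintype ι] [Nonempty ι] {g : F → F} {V : F → ℝ}
    (hV : IsStrictLyapunov g V) {A : ι → F →L[ℝ] F} (hinj : ∀ i, Function.Injective (A i))
    (hcomm : ∀ i, Function.Commute g (A i)) :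
    IsStrictLyapunov g (fun p => ∑ i, V (A i p)) where
  differentiable := .fun_sum fun i _ => hV.differentiable.comp (A i).differentiable
  pos p hp := Finset.sum_pos (fun i _ => hV.pos _ ((map_ne_zero_iff _ (hinj i)).2 hp))
    Finset.univ_nonempty
  inner_gradient_neg p hp := by
    rw [inner_gradient_left,
      fderiv_fun_sum (A := fun i q => V (A i q)) (u := .univ) fun i _ =>
        (hV.differentiable.comp (A i).differentiable).differentiableAt,
      sum_apply]
    refine Finset.sum_neg (fun i _ => ?_) Finset.univ_nonempty
    rw [fderiv_comp_apply_of_commute (hcomm i) (hV.differentiable _), ← inner_gradient_left]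
    exact hV.inner_gradient_neg _ ((map_ne_zero_iff _ (hinj i)).2 hp)

noncomputable def quarterTurn : EuclideanSpace ℝ (Fin 2) →L[ℝ] EuclideanSpace ℝ (Fin 2) :=
  LinearMap.toContinuousLinearMap
    { toFun := fun p => euclidPt (p 1) (-p 0)
      map_add' p q := by ext i; fin_cases i <;> simp [euclidPt]; ring
      map_smul' c p := by ext i; fin_cases i <;> simp [euclidPt] }

@[simp] lemma euclidPt_apply_zero (x y : ℝ) : euclidPt x y 0 = x := rfl

@[simp] lemma euclidPt_apply_one (x y : ℝ) : euclidPt x y 1 = y := rfl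

lemma euclidPt_surjective (p : EuclideanSpace ℝ (Fin 2)) : ∃ x y, euclidPt x y = p :=
  ⟨p 0, p 1, by ext i; fin_cases i <;> rfl⟩

lemma quarterTurn_apply (p : EuclideanSpace ℝ (Fin 2)) :
    quarterTurn p = euclidPt (p 1) (-p 0) := rfl

@[simp] lemma quarterTurn_euclidPt (x y : ℝ) : quarterTurn (euclidPt x y) = euclidPt y (-x) := rfl

lemma quarterTurn_injective : Function.Injective quarterTurn := by
  intro p q h
  have h0 := congrArg (· 0) h
  have h1 := congrArg (· 1) h
  simp only [quarterTurn_apply, euclidPt_apply_zero, euclidPt_apply_one, neg_inj] at h0 h1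
  ext i; fin_cases i <;> assumption

lemma commute_quarterTurn {θ : ℝ} {g : EuclideanSpace ℝ (Fin 2) → EuclideanSpace ℝ (Fin 2)}
    (hg1 : ∀ p : EuclideanSpace ℝ (Fin 2), g p 0 = -sin θ * (p 0)^3 + cos θ * (p 1)^3)
    (hg2 : ∀ p : EuclideanSpace ℝ (Fin 2), g p 1 = -cos θ * (p 0)^3 - sin θ * (p 1)^3) :
    Function.Commute g quarterTurn := by
  intro p
  ext i; fin_cases i <;> simp [quarterTurn_apply, hg1, hg2] <;> ring

/-- Let `g_θ(x,y) = (−sin(θ)x³ + cos(θ)y³, −cos(θ)x³ − sin(θ)y³)` and let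
`V : ℝ² → ℝ` be differentiable with `V(x,y) > 0` and `⟨∇V(x,y), g_θ(x,y)⟩ < 0` for all
`(x,y) ≠ (0,0)`. Then `W(x,y) := V(x,y) + V(y,−x) + V(−x,−y) + V(−y,x)` satisfies
`W(y,−x) = W(x,y)`, `W(x,y) > 0` for `(x,y) ≠ (0,0)`, and `⟨∇W(x,y), g_θ(x,y)⟩ < 0` for
`(x,y) ≠ (0,0)`. -/
theorem symmetrized_lyapunov_function
    (θ : ℝ) (g : EuclideanSpace ℝ (Fin 2) → EuclideanSpace ℝ (Fin 2))
    (hg1 : ∀ p : EuclideanSpace ℝ (Fin 2), g p 0 = -sin θ * (p 0)^3 + cos θ * (p 1)^3)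
    (hg2 : ∀ p : EuclideanSpace ℝ (Fin 2), g p 1 = -cos θ * (p 0)^3 - sin θ * (p 1)^3)
    (V : EuclideanSpace ℝ (Fin 2) → ℝ) (hVdiff : Differentiable ℝ V)
    (hVpos : ∀ p : EuclideanSpace ℝ (Fin 2), p ≠ 0 → 0 < V p)
    (hVdec : ∀ p : EuclideanSpace ℝ (Fin 2), p ≠ 0 → ⟪gradient V p, g p⟫ < 0)
    (W : EuclideanSpace ℝ (Fin 2) → ℝ)
    (hW : ∀ x y : ℝ, W (euclidPt x y)
      = V (euclidPt x y) + V (euclidPt y (-x)) + V (euclidPt (-x) (-y)) + V (euclidPt (-y) x)) :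
    (∀ x y : ℝ, W (euclidPt y (-x)) = W (euclidPt x y)) ∧
    (∀ p : EuclideanSpace ℝ (Fin 2), p ≠ 0 → 0 < W p) ∧
    (∀ p : EuclideanSpace ℝ (Fin 2), p ≠ 0 → ⟪gradient W p, g p⟫ < 0) := by
  have hW_sum : W = fun p => ∑ i : Fin 4, V ((quarterTurn ^ (i : ℕ)) p) := by
    funext p
    obtain ⟨x, y, rfl⟩ := euclidPt_surjective p
    simp [hW, Fin.sum_univ_four]
  have hW_lyap : IsStrictLyapunov g W := by
    rw [hW_sum]
    refine IsStrictLyapunov.sum_comp ⟨hVdiff, hVpos, hVdec⟩ (fun i => ?_) (fun i => ?_) <;>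
      rw [FunLike.coe_pow_eq_iterate]
    · exact quarterTurn_injective.iterate _
    · exact (commute_quarterTurn hg1 hg2).iterate_right _
  refine ⟨fun x y => ?_, hW_lyap.pos, hW_lyap.inner_gradient_neg⟩
  rw [hW, hW, neg_neg]
  ring
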